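/- arXiv:1006.2665 — 2 statements merged into one kernel-verified Lean document; each statement's English description precedes it below -/
import Mathlib

section
/- Let Y be a closed infinite-dimensional subspace of E_X and suppose that the restriction of Q_X to Y is strictly singular, i.e. for every infinite-dimensional closed subspace Z of Y and every c > 0 there exists z ∈ Z with ‖Q_X(z)‖_X < c·‖z‖_E. Then Y contains a sequence which is equivalent to the standard unit vector basis of c₀. -/
/-! Gliding hump. Strict singularity, applied to `Y` cut down by finitely many coordinate
functionals, gives unit vectors `y ∈ Y` with `‖Q y‖` as small as we like that, by density of
`c₀₀`, are close to finitely supported vectors living beyond any prescribed coordinate.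
Choosing them one after the other yields consecutive blocks `w k` with `‖ι (w k)‖ ≈ 1` and
full sums `∑ₙ (w k) n • x n = Q (ι (w k)) ≈ 0`. A partial sum of `∑ₖ a k • w k` is then a
partial sum of the single block it cuts plus the negligible full sums of the earlier blocks,
so its `E_X`-norm is comparable to `maxₖ |a k|`; the `y k` are summably small perturbations. -/

open Finset

lemma Submodule.not_finiteDimensional_inf_ker {K V W : Type*} [Field K] [AddCommGroup V]
    [Module K V] [AddCommGroup W] [Module K W] [FiniteDimensional K W] {Y : Submodule K V}
    (hY : ¬FiniteDimensional K Y) (ψ : V →ₗ[K] W) : ¬FiniteDimensional K ↥(Y ⊓ LinearMap.ker ψ) :=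
  fun h => hY <| Module.Finite.iff_fg.mpr <|
    Submodule.fg_of_fg_map_of_fg_inf_ker ψ (Module.Finite.iff_fg.mp inferInstance)
      (Module.Finite.iff_fg.mp h)

section NormedSpace

variable {α E : Type*} [NormedAddCommGroup E] [NormedSpace ℝ E]

lemma norm_sum_smul_le_mul_sum {s : Finset α} {a : α → ℝ} {v : α → E} {A : ℝ} {ε : α → ℝ}
    (ha : ∀ k ∈ s, |a k| ≤ A) (hv : ∀ k ∈ s, ‖v k‖ ≤ ε k) :
    ‖∑ k ∈ s, a k • v k‖ ≤ A * ∑ k ∈ s, ε k := by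
  rw [mul_sum]
  refine (norm_sum_le _ _).trans (sum_le_sum fun k hk => ?_)
  rw [norm_smul, Real.norm_eq_abs]
  exact mul_le_mul (ha k hk) (hv k hk) (norm_nonneg _) ((abs_nonneg _).trans (ha k hk))

lemma norm_sum_erase_smul_le {s : Finset α} [DecidableEq α] {k₀ : α} {a : α → ℝ} {v : α → E}
    {A : ℝ} {ε : α → ℝ} (hA : 0 ≤ A) (ha : ∀ k ∈ s, |a k| ≤ A) (hε : ∀ k ∈ s, 0 ≤ ε k)
    (hv : ∀ k ∈ s, k ≠ k₀ → ‖v k‖ ≤ ε k) :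
    ‖∑ k ∈ s.erase k₀, a k • v k‖ ≤ A * ∑ k ∈ s, ε k :=
  (norm_sum_smul_le_mul_sum (fun k hk => ha k (mem_of_mem_erase hk))
    fun k hk => hv k (mem_of_mem_erase hk) (ne_of_mem_erase hk)).trans <|
    mul_le_mul_of_nonneg_left (sum_le_sum_of_subset_of_nonneg (erase_subset _ _)
      fun k hk _ => hε k hk) hA

lemma norm_sum_smul_le_of_forall_ne {s : Finset α} {k₀ : α} {a : α → ℝ} {v : α → E}
    {A B : ℝ} {ε : α → ℝ} (hA : 0 ≤ A) (ha : ∀ k ∈ s, |a k| ≤ A) (hε : ∀ k ∈ s, 0 ≤ ε k)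
    (hB : ‖v k₀‖ ≤ B) (hv : ∀ k ∈ s, k ≠ k₀ → ‖v k‖ ≤ ε k) :
    ‖∑ k ∈ s, a k • v k‖ ≤ A * B + A * ∑ k ∈ s, ε k := by
  classical
  have hrest := norm_sum_erase_smul_le hA ha hε hv
  by_cases hk₀ : k₀ ∈ s
  · rw [← add_sum_erase s _ hk₀]
    refine (norm_add_le _ _).trans (add_le_add ?_ hrest)
    rw [norm_smul, Real.norm_eq_abs]
    exact mul_le_mul (ha k₀ hk₀) hB (norm_nonneg _) hA
  · rw [erase_eq_of_notMem hk₀] at hrest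
    nlinarith [mul_nonneg hA ((norm_nonneg _).trans hB)]

lemma abs_mul_norm_sub_le_norm_sum_smul {s : Finset α} {k₀ : α} (hk₀ : k₀ ∈ s) {a : α → ℝ}
    {v : α → E} {A : ℝ} {ε : α → ℝ} (hA : 0 ≤ A) (ha : ∀ k ∈ s, |a k| ≤ A)
    (hε : ∀ k ∈ s, 0 ≤ ε k) (hv : ∀ k ∈ s, k ≠ k₀ → ‖v k‖ ≤ ε k) :
    |a k₀| * ‖v k₀‖ - A * ∑ k ∈ s, ε k ≤ ‖∑ k ∈ s, a k • v k‖ := by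
  classical
  have hrest := norm_sum_erase_smul_le hA ha hε hv
  rw [← add_sum_erase s (fun k => a k • v k) hk₀]
  have := norm_sub_le (a k₀ • v k₀ + ∑ k ∈ s.erase k₀, a k • v k) (∑ k ∈ s.erase k₀, a k • v k)
  rw [add_sub_cancel_right, norm_smul, Real.norm_eq_abs] at this
  linarith

def IsC0EquivalentWith (u : ℕ → E) (M : ℝ) : Prop :=
  ∀ (j : ℕ) (a : ℕ → ℝ),
    M⁻¹ * (range (j + 1)).sup' nonempty_range_add_one (fun k => |a k|)
        ≤ ‖∑ k ∈ range (j + 1), a k • u k‖ ∧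
      ‖∑ k ∈ range (j + 1), a k • u k‖
        ≤ M * (range (j + 1)).sup' nonempty_range_add_one (fun k => |a k|)

end NormedSpace

section StrictlySingular

variable {E F : Type*} [NormedAddCommGroup E] [NormedSpace ℝ E]
  [NormedAddCommGroup F] [NormedSpace ℝ F]

def IsStrictlySingularOn (Q : E →L[ℝ] F) (Y : Submodule ℝ E) : Prop :=
  ∀ Z : Submodule ℝ E, Z ≤ Y → IsClosed (Z : Set E) → ¬FiniteDimensional ℝ Z →
    ∀ c : ℝ, 0 < c → ∃ z ∈ Z, ‖Q z‖ < c * ‖z‖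

lemma IsStrictlySingularOn.exists_norm_eq_one_mem_ker {Q : E →L[ℝ] F} {Y : Submodule ℝ E}
    (hQ : IsStrictlySingularOn Q Y) (hYc : IsClosed (Y : Set E)) (hY : ¬FiniteDimensional ℝ Y)
    {G : Type*} [NormedAddCommGroup G] [NormedSpace ℝ G] [FiniteDimensional ℝ G]
    (ψ : E →L[ℝ] G) {θ : ℝ} (hθ : 0 < θ) :
    ∃ y ∈ Y, ‖y‖ = 1 ∧ ‖Q y‖ < θ ∧ ψ y = 0 := by
  obtain ⟨z, ⟨hzY, hzψ : ψ z = 0⟩, hz⟩ := hQ _ inf_le_left (hYc.inter ψ.isClosed_ker)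
    (Submodule.not_finiteDimensional_inf_ker hY (ψ : E →ₗ[ℝ] G)) θ hθ
  have hz0 : z ≠ 0 := by rintro rfl; simp at hz
  have hz0' : 0 < ‖z‖ := norm_pos_iff.mpr hz0
  refine ⟨‖z‖⁻¹ • z, Y.smul_mem _ hzY, norm_smul_inv_norm hz0, ?_, by simp [hzψ]⟩
  rwa [map_smul, norm_smul, norm_inv, norm_norm, inv_mul_lt_iff₀ hz0', mul_comm]

end StrictlySingular

section PartialSums

variable {X E : Type*} [NormedAddCommGroup X] [NormedSpace ℝ X]
  [NormedAddCommGroup E] [NormedSpace ℝ E] {x : ℕ → X}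

def partialSum (x : ℕ → X) (m : ℕ) : (ℕ →₀ ℝ) →ₗ[ℝ] X where
  toFun z := ∑ n ∈ range (m + 1), z n • x n
  map_add' z z' := by simp only [Finsupp.add_apply, add_smul, sum_add_distrib]
  map_smul' c z := by simp only [Finsupp.smul_apply, smul_eq_mul, mul_smul, smul_sum,
    RingHom.id_apply]

lemma partialSum_apply (m : ℕ) (z : ℕ →₀ ℝ) :
    partialSum x m z = ∑ n ∈ range (m + 1), z n • x n := rfl

lemma partialSum_eq_zero {m : ℕ} {z : ℕ →₀ ℝ} (hz : ∀ n ∈ z.support, m < n) :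
    partialSum x m z = 0 :=
  (partialSum_apply m z).trans <| sum_eq_zero fun n hn => by
    rw [Finsupp.notMem_support_iff.mp fun h => by linarith [hz n h, mem_range.mp hn], zero_smul]

lemma partialSum_eq_linearCombination {m : ℕ} {z : ℕ →₀ ℝ} (hz : ∀ n ∈ z.support, n ≤ m) :
    partialSum x m z = Finsupp.linearCombination ℝ x z := by
  rw [Finsupp.linearCombination_apply, Finsupp.sum, partialSum_apply]
  refine (sum_subset (fun n hn => mem_range.mpr (Nat.lt_succ_of_le (hz n hn)))
    fun n _ hn => ?_).symm
  rw [Finsupp.notMem_support_iff.mp hn, zero_smul]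

lemma norm_partialSum_le_sum_abs (hx : ∀ n, ‖x n‖ = 1) (m : ℕ) (z : ℕ →₀ ℝ) :
    ‖partialSum x m z‖ ≤ ∑ n ∈ z.support, |z n| :=
  calc ‖partialSum x m z‖ ≤ ∑ n ∈ range (m + 1), |z n| :=
        (norm_sum_le (range (m + 1)) fun n => z n • x n).trans_eq <| sum_congr rfl fun n _ => by
          rw [norm_smul, hx, mul_one, Real.norm_eq_abs]
    _ ≤ ∑ n ∈ range (m + 1) ∪ z.support, |z n| :=
        sum_le_sum_of_subset_of_nonneg subset_union_left fun n _ _ => abs_nonneg _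
    _ = ∑ n ∈ z.support, |z n| :=
        (sum_subset subset_union_right fun n _ hn => by
          rw [Finsupp.notMem_support_iff.mp hn, abs_zero]).symm

lemma exists_forall_ne_norm_partialSum_le {w : ℕ → ℕ →₀ ℝ} {g : ℕ → ℕ} (hg : StrictMono g)
    (hw : ∀ k, ∀ n ∈ (w k).support, g k < n ∧ n ≤ g (k + 1)) {θ : ℕ → ℝ} (hθ : ∀ k, 0 ≤ θ k)
    (hwθ : ∀ k, ‖Finsupp.linearCombination ℝ x (w k)‖ ≤ θ k) (m : ℕ) :
    ∃ k₀, ∀ k ≠ k₀, ‖partialSum x m (w k)‖ ≤ θ k := by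
  classical
  -- `k₀` is the block that the `m`-th partial sum cuts; earlier blocks are summed in full.
  have hex : ∃ k, m ≤ g (k + 1) := ⟨m, (Nat.le_succ m).trans (hg.id_le (m + 1))⟩
  refine ⟨Nat.find hex, fun k hk => ?_⟩
  rcases hk.lt_or_gt with hlt | hgt
  · have hfull : g (k + 1) < m := not_le.mp (Nat.find_min hex hlt)
    rw [partialSum_eq_linearCombination fun n hn => by linarith [(hw k n hn).2]]
    exact hwθ k
  · have hzero : m ≤ g k := (Nat.find_spec hex).trans (hg.monotone hgt)
    rw [partialSum_eq_zero fun n hn => by linarith [(hw k n hn).1], norm_zero]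
    exact hθ k

def IsPartialSumNorm (x : ℕ → X) (ι : (ℕ →₀ ℝ) →ₗ[ℝ] E) : Prop :=
  ∀ z, ‖ι z‖ = ⨆ m, ‖partialSum x m z‖

namespace IsPartialSumNorm

variable {ι : (ℕ →₀ ℝ) →ₗ[ℝ] E} {w : ℕ → ℕ →₀ ℝ} {θ : ℕ → ℝ} {s : Finset ℕ} {a : ℕ → ℝ} {A : ℝ}

lemma norm_le_of_forall (hι : IsPartialSumNorm x ι) {z : ℕ →₀ ℝ} {C : ℝ}
    (h : ∀ m, ‖partialSum x m z‖ ≤ C) : ‖ι z‖ ≤ C :=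
  (hι z).trans_le (ciSup_le h)

lemma exists_lt_norm_partialSum (hι : IsPartialSumNorm x ι) {z : ℕ →₀ ℝ} {c : ℝ}
    (h : c < ‖ι z‖) : ∃ m, c < ‖partialSum x m z‖ := by
  by_contra! h'
  exact (hι.norm_le_of_forall h').not_gt h

lemma norm_partialSum_le (hx : ∀ n, ‖x n‖ = 1) (hι : IsPartialSumNorm x ι) (m : ℕ)
    (z : ℕ →₀ ℝ) : ‖partialSum x m z‖ ≤ ‖ι z‖ :=
  (hι z).symm ▸ le_ciSup ⟨_, Set.forall_mem_range.mpr (norm_partialSum_le_sum_abs hx · z)⟩ m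

lemma norm_le_sum_abs (hx : ∀ n, ‖x n‖ = 1) (hι : IsPartialSumNorm x ι) (z : ℕ →₀ ℝ) :
    ‖ι z‖ ≤ ∑ n ∈ z.support, |z n| :=
  hι.norm_le_of_forall (norm_partialSum_le_sum_abs hx · z)

lemma abs_apply_le (hx : ∀ n, ‖x n‖ = 1) (hι : IsPartialSumNorm x ι) (z : ℕ →₀ ℝ) (n : ℕ) :
    |z n| ≤ 2 * ‖ι z‖ := by
  have hS := hι.norm_partialSum_le hx
  have hzn : ‖z n • x n‖ = |z n| := by rw [norm_smul, hx, mul_one, Real.norm_eq_abs]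
  cases n with
  | zero =>
    have := hS 0 z
    rw [partialSum_apply, sum_range_one, hzn] at this
    linarith [norm_nonneg (ι z)]
  | succ n =>
    have h : z (n + 1) • x (n + 1) = partialSum x (n + 1) z - partialSum x n z := by
      rw [partialSum_apply, partialSum_apply, sum_range_succ _ (n + 1), add_sub_cancel_left]
    calc |z (n + 1)| ≤ ‖partialSum x (n + 1) z‖ + ‖partialSum x n z‖ := by
          rw [← hzn, h]; exact norm_sub_le _ _
      _ ≤ 2 * ‖ι z‖ := by linarith [hS (n + 1) z, hS n z]

lemma exists_coordinate (hx : ∀ n, ‖x n‖ = 1) (hι : IsPartialSumNorm x ι) (n : ℕ) :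
    ∃ f : E →L[ℝ] ℝ, (∀ z, f (ι z) = z n) ∧ ∀ e, |f e| ≤ 2 * ‖e‖ := by
  have hinj : Function.Injective ι := (injective_iff_map_eq_zero ι).mpr fun z hz =>
    Finsupp.ext fun k => abs_nonpos_iff.mp (by simpa [hz] using hι.abs_apply_le hx z k)
  let e := LinearEquiv.ofInjective ι hinj
  let φ := (Finsupp.lapply n ∘ₗ e.symm.toLinearMap).mkContinuous 2 fun d => by
    simpa [e] using hι.abs_apply_le hx (e.symm d) n
  obtain ⟨f, hfφ, hf⟩ := exists_extension_norm_eq _ φ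
  refine ⟨f, fun z => ?_, fun v => ?_⟩
  · simpa [φ, e] using hfφ (e z)
  · rw [← Real.norm_eq_abs]
    exact (f.le_opNorm v).trans (mul_le_mul_of_nonneg_right
      (hf ▸ LinearMap.mkContinuous_norm_le _ zero_le_two _) (norm_nonneg v))

lemma exists_approx_support_gt (hx : ∀ n, ‖x n‖ = 1) (hι : IsPartialSumNorm x ι)
    (hιd : DenseRange ι) {p : ℕ} {y : E} (hy : ∀ n ≤ p, ∀ z : ℕ →₀ ℝ, |z n| ≤ 2 * ‖y - ι z‖)
    {η : ℝ} (hη : 0 < η) : ∃ w : ℕ →₀ ℝ, (∀ n ∈ w.support, p < n) ∧ ‖y - ι w‖ < η := by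
  obtain ⟨_, ⟨w₀, rfl⟩, hw₀⟩ := Metric.mem_closure_iff.mp (hιd y) (η / (2 * p + 3)) (by positivity)
  rw [dist_eq_norm] at hw₀
  set d := ‖y - ι w₀‖
  set r := w₀.filter fun n => ¬p < n
  have hr : ‖ι r‖ ≤ (p + 1) * (2 * d) :=
    calc ‖ι r‖ ≤ ∑ n ∈ r.support, |r n| := hι.norm_le_sum_abs hx r
      _ ≤ ∑ n ∈ range (p + 1), |r n| :=
        sum_le_sum_of_subset_of_nonneg (fun n hn => by
          simp only [r, Finsupp.support_filter, mem_filter] at hn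
          exact mem_range.mpr (by omega)) fun n _ _ => abs_nonneg _
      _ ≤ ∑ n ∈ range (p + 1), 2 * d := sum_le_sum fun n hn => by
        rw [Finsupp.filter_apply]
        split_ifs
        · simp [d]
        · exact hy n (Nat.le_of_lt_succ (mem_range.mp hn)) w₀
      _ = (p + 1) * (2 * d) := by simp
  refine ⟨w₀.filter (p < ·), fun n hn => by
    simp only [Finsupp.support_filter, mem_filter] at hn
    exact hn.2, ?_⟩
  have hsplit : ι w₀ = ι (w₀.filter (p < ·)) + ι r := by
    rw [← map_add, Finsupp.filter_add_filter_not]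
  calc ‖y - ι (w₀.filter (p < ·))‖ = ‖(y - ι w₀) + ι r‖ := by
        rw [hsplit]; congr 1; abel
    _ ≤ d + (p + 1) * (2 * d) := (norm_add_le _ _).trans (add_le_add le_rfl hr)
    _ = (2 * p + 3) * d := by ring
    _ < η := by rwa [lt_div_iff₀' (by positivity)] at hw₀

lemma exists_near_block {F : Type*} [NormedAddCommGroup F] [NormedSpace ℝ F]
    (hx : ∀ n, ‖x n‖ = 1) (hι : IsPartialSumNorm x ι) (hιd : DenseRange ι) {Q : E →L[ℝ] F}
    {Y : Submodule ℝ E} (hQ : IsStrictlySingularOn Q Y) (hYc : IsClosed (Y : Set E))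
    (hY : ¬FiniteDimensional ℝ Y) (p : ℕ) {ε : ℝ} (hε : 0 < ε) :
    ∃ y ∈ Y, ‖y‖ = 1 ∧ ∃ w : ℕ →₀ ℝ, ∃ q, p < q ∧ (∀ n ∈ w.support, p < n ∧ n ≤ q) ∧
      ‖y - ι w‖ ≤ ε ∧ ‖Q (ι w)‖ ≤ ε := by
  choose f hfι hf using hι.exists_coordinate hx
  obtain ⟨y, hyY, hy1, hQy, hfy⟩ := hQ.exists_norm_eq_one_mem_ker hYc hY
    (ContinuousLinearMap.pi fun i : Fin (p + 1) => f i) (half_pos hε)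
  have hy : ∀ n ≤ p, ∀ z : ℕ →₀ ℝ, |z n| ≤ 2 * ‖y - ι z‖ := fun n hn z => by
    have hfny : f n y = 0 := congrFun hfy ⟨n, Nat.lt_succ_of_le hn⟩
    rw [norm_sub_rev, ← hfι n z, ← sub_zero (f n (ι z)), ← hfny, ← map_sub]
    exact hf n _
  have hQ1 : 0 < ‖Q‖ + 1 := by positivity
  set η := ε / 2 / (‖Q‖ + 1)
  have hηε : η ≤ ε / 2 := div_le_self (half_pos hε).le (by linarith [norm_nonneg Q])
  have hQη : ‖Q‖ * η ≤ ε / 2 := by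
    rw [mul_div_assoc', div_le_iff₀ hQ1]; nlinarith [norm_nonneg Q]
  obtain ⟨w, hw, hyw⟩ := hι.exists_approx_support_gt hx hιd hy (div_pos (half_pos hε) hQ1)
  refine ⟨y, hyY, hy1, w, max (p + 1) (w.support.sup id), by omega,
    fun n hn => ⟨hw n hn, le_max_of_le_right (le_sup (f := id) hn)⟩, ?_, ?_⟩
  · linarith
  · calc ‖Q (ι w)‖ = ‖Q y - Q (y - ι w)‖ := by rw [map_sub, sub_sub_cancel]
      _ ≤ ‖Q y‖ + ‖Q‖ * ‖y - ι w‖ := (norm_sub_le _ _).trans (add_le_add le_rfl (Q.le_opNorm _))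
      _ ≤ ε / 2 + ε / 2 :=
        add_le_add hQy.le ((mul_le_mul_of_nonneg_left hyw.le (norm_nonneg Q)).trans hQη)
      _ = ε := add_halves ε

lemma norm_sum_smul_le (hx : ∀ n, ‖x n‖ = 1) (hι : IsPartialSumNorm x ι) (hθ : ∀ k, 0 ≤ θ k)
    (hblock : ∀ m, ∃ k₀, ∀ k ≠ k₀, ‖partialSum x m (w k)‖ ≤ θ k) (hw : ∀ k, ‖ι (w k)‖ ≤ 2)
    (hA : 0 ≤ A) (ha : ∀ k ∈ s, |a k| ≤ A) :
    ‖ι (∑ k ∈ s, a k • w k)‖ ≤ A * 2 + A * ∑ k ∈ s, θ k :=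
  hι.norm_le_of_forall fun m => by
    obtain ⟨k₀, hk₀⟩ := hblock m
    simp only [map_sum, map_smul]
    exact norm_sum_smul_le_of_forall_ne hA ha (fun k _ => hθ k)
      ((hι.norm_partialSum_le hx m _).trans (hw k₀)) fun k _ => hk₀ k

lemma le_norm_sum_smul (hx : ∀ n, ‖x n‖ = 1) (hι : IsPartialSumNorm x ι) (hθ : ∀ k, 0 ≤ θ k)
    (hblock : ∀ m, ∃ k₀, ∀ k ≠ k₀, ‖partialSum x m (w k)‖ ≤ θ k) (hA : 0 ≤ A)
    (ha : ∀ k ∈ s, |a k| ≤ A) {k' : ℕ} (hk' : k' ∈ s) (hθk' : θ k' < 1 / 2)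
    (hwk' : 1 / 2 < ‖ι (w k')‖) :
    |a k'| / 2 - A * ∑ k ∈ s, θ k ≤ ‖ι (∑ k ∈ s, a k • w k)‖ := by
  obtain ⟨m, hm⟩ := hι.exists_lt_norm_partialSum hwk'
  obtain ⟨k₀, hk₀⟩ := hblock m
  obtain rfl : k₀ = k' := by
    by_contra h
    linarith [hk₀ k' (Ne.symm h)]
  calc |a k₀| / 2 - A * ∑ k ∈ s, θ k
      ≤ |a k₀| * ‖partialSum x m (w k₀)‖ - A * ∑ k ∈ s, θ k := by
        nlinarith [abs_nonneg (a k₀)]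
    _ ≤ ‖∑ k ∈ s, a k • partialSum x m (w k)‖ :=
        abs_mul_norm_sub_le_norm_sum_smul hk' hA ha (fun k _ => hθ k) fun k _ => hk₀ k
    _ = ‖partialSum x m (∑ k ∈ s, a k • w k)‖ := by simp only [map_sum, map_smul]
    _ ≤ ‖ι (∑ k ∈ s, a k • w k)‖ := hι.norm_partialSum_le hx m _

lemma isC0EquivalentWith_of_near_blocks {y : ℕ → E} (hx : ∀ n, ‖x n‖ = 1)
    (hι : IsPartialSumNorm x ι) (hθ0 : ∀ k, 0 ≤ θ k) (hθ : ∀ j, ∑ k ∈ range j, θ k ≤ 1 / 32)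
    (hblock : ∀ m, ∃ k₀, ∀ k ≠ k₀, ‖partialSum x m (w k)‖ ≤ θ k) (hy : ∀ k, ‖y k‖ = 1)
    (hyw : ∀ k, ‖y k - ι (w k)‖ ≤ θ k) : IsC0EquivalentWith y 4 := by
  intro j a
  set A := (range (j + 1)).sup' nonempty_range_add_one (fun k => |a k|)
  have ha : ∀ k ∈ range (j + 1), |a k| ≤ A := fun k hk => le_sup' (fun k => |a k|) hk
  obtain ⟨k', hk', hAk'⟩ := exists_mem_eq_sup' nonempty_range_add_one (fun k => |a k|)
  have hA : 0 ≤ A := (abs_nonneg _).trans (ha k' hk')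
  have hθ1 : ∀ k, θ k ≤ 1 / 32 := fun k =>
    (single_le_sum (fun i _ => hθ0 i) (self_mem_range_succ k)).trans (hθ (k + 1))
  have hAθ : A * ∑ k ∈ range (j + 1), θ k ≤ A / 32 := by
    nlinarith [mul_le_mul_of_nonneg_left (hθ (j + 1)) hA]
  have hwθ : ∀ k, |‖ι (w k)‖ - 1| ≤ θ k := fun k => by
    rw [← hy k, abs_sub_comm]
    exact (abs_norm_sub_norm_le _ _).trans (hyw k)
  have hpert : ‖∑ k ∈ range (j + 1), a k • y k - ι (∑ k ∈ range (j + 1), a k • w k)‖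
      ≤ A * ∑ k ∈ range (j + 1), θ k := by
    simp only [map_sum, map_smul, ← sum_sub_distrib, ← smul_sub]
    exact norm_sum_smul_le_mul_sum ha fun k _ => hyw k
  have hupper := hι.norm_sum_smul_le hx hθ0 hblock
    (fun k => by linarith [(abs_le.mp (hwθ k)).2, hθ1 k]) hA ha
  have hlower := hι.le_norm_sum_smul hx hθ0 hblock hA ha hk' (by linarith [hθ1 k'])
    (by linarith [(abs_le.mp (hwθ k')).1, hθ1 k'])
  rw [← hAk'] at hlower
  have h₁ := norm_sub_norm_le (∑ k ∈ range (j + 1), a k • y k)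
    (ι (∑ k ∈ range (j + 1), a k • w k))
  have h₂ := norm_sub_norm_le (ι (∑ k ∈ range (j + 1), a k • w k))
    (∑ k ∈ range (j + 1), a k • y k)
  rw [norm_sub_rev] at h₂
  constructor <;> linarith

end IsPartialSumNorm

end PartialSums

lemma sum_range_half_pow_div_le (j : ℕ) : ∑ k ∈ range j, (1 / 2 : ℝ) ^ k / 64 ≤ 1 / 32 := by
  rw [← sum_div]
  linarith [sum_geometric_two_le j]

theorem stmt_6_general {X : Type*} [NormedAddCommGroup X] [NormedSpace ℝ X]
    (x : ℕ → X) (hx1 : ∀ n, ‖x n‖ = 1)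
    {E : Type*} [NormedAddCommGroup E] [NormedSpace ℝ E]
    (ι : (ℕ →₀ ℝ) →ₗ[ℝ] E) (hιd : DenseRange ι)
    (hnorm : ∀ z : ℕ →₀ ℝ,
      ‖ι z‖ = ⨆ m : ℕ, ‖∑ n ∈ Finset.range (m + 1), z n • x n‖)
    (Q : E →L[ℝ] X) (hQ : ∀ n, Q (ι (Finsupp.single n 1)) = x n)
    -- `Y` is a closed infinite-dimensional subspace of `E_X`
    (Y : Submodule ℝ E) (hYc : IsClosed (Y : Set E)) (hYinf : ¬ FiniteDimensional ℝ Y)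
    -- the restriction of `Q` to `Y` is strictly singular
    (hss : ∀ Z : Submodule ℝ E, Z ≤ Y → IsClosed (Z : Set E) → ¬ FiniteDimensional ℝ Z →
      ∀ c : ℝ, 0 < c → ∃ z ∈ Z, ‖Q z‖ < c * ‖z‖) :
    -- `Y` contains a sequence equivalent to the unit vector basis of `c₀`
    ∃ u : ℕ → E, (∀ k, u k ∈ Y) ∧
      ∃ M : ℝ, 1 ≤ M ∧ ∀ (j : ℕ) (a : ℕ → ℝ),
        M⁻¹ * (Finset.range (j + 1)).sup' Finset.nonempty_range_add_one (fun k => |a k|)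
            ≤ ‖∑ k ∈ Finset.range (j + 1), a k • u k‖ ∧
        ‖∑ k ∈ Finset.range (j + 1), a k • u k‖
            ≤ M * (Finset.range (j + 1)).sup' Finset.nonempty_range_add_one (fun k => |a k|) := by
  have hι : IsPartialSumNorm x ι := hnorm
  have hQι : ∀ z, Q (ι z) = Finsupp.linearCombination ℝ x z := fun z => by
    refine LinearMap.congr_fun (Finsupp.lhom_ext (φ := Q.toLinearMap ∘ₗ ι) fun n c => ?_) z
    rw [LinearMap.comp_apply, ← mul_one c, ← smul_eq_mul, ← Finsupp.smul_single, map_smul]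
    simp [hQ]
  have hθ : ∀ k : ℕ, 0 < (1 / 2 : ℝ) ^ k / 64 := fun k => by positivity
  choose y hyY hy1 w q hpq hw hyw hQw using fun k p =>
    hι.exists_near_block hx1 hιd hss hYc hYinf p (hθ k)
  let g : ℕ → ℕ := fun k => Nat.rec 0 (fun k gk => q k gk) k
  have hg : StrictMono g := strictMono_nat_of_lt_succ fun k => hpq k (g k)
  have hblock := exists_forall_ne_norm_partialSum_le (w := fun k => w k (g k)) hg
    (fun k => hw k (g k)) (fun k => (hθ k).le) fun k => hQι _ ▸ hQw k (g k)
  exact ⟨fun k => y k (g k), fun k => hyY k (g k), 4, by norm_num,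
    hι.isC0EquivalentWith_of_near_blocks hx1 (fun k => (hθ k).le) sum_range_half_pow_div_le hblock
      (fun k => hy1 k (g k)) fun k => hyw k (g k)⟩

/-- If `Y` is a closed infinite-dimensional subspace of `E_X`
on which the quotient operator `Q_X` is strictly singular, then `Y` contains a
sequence equivalent to the standard unit vector basis of `c₀`. -/
theorem stmt_6 {X : Type*} [NormedAddCommGroup X] [NormedSpace ℝ X] [CompleteSpace X]
    (x : ℕ → X) (hx1 : ∀ n, ‖x n‖ = 1)
    (hxd : ∀ y : X, ‖y‖ = 1 → ∀ ε : ℝ, 0 < ε → ∃ n, ‖y - x n‖ < ε)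
    {E : Type*} [NormedAddCommGroup E] [NormedSpace ℝ E] [CompleteSpace E]
    (ι : (ℕ →₀ ℝ) →ₗ[ℝ] E) (hιd : DenseRange ι)
    (hnorm : ∀ z : ℕ →₀ ℝ,
      ‖ι z‖ = ⨆ m : ℕ, ‖∑ n ∈ Finset.range (m + 1), z n • x n‖)
    (Q : E →L[ℝ] X) (hQ : ∀ n, Q (ι (Finsupp.single n 1)) = x n)
    -- `Y` is a closed infinite-dimensional subspace of `E_X`
    (Y : Submodule ℝ E) (hYc : IsClosed (Y : Set E)) (hYinf : ¬ FiniteDimensional ℝ Y)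
    -- the restriction of `Q` to `Y` is strictly singular
    (hss : ∀ Z : Submodule ℝ E, Z ≤ Y → IsClosed (Z : Set E) → ¬ FiniteDimensional ℝ Z →
      ∀ c : ℝ, 0 < c → ∃ z ∈ Z, ‖Q z‖ < c * ‖z‖) :
    -- `Y` contains a sequence equivalent to the unit vector basis of `c₀`
    ∃ u : ℕ → E, (∀ k, u k ∈ Y) ∧
      ∃ M : ℝ, 1 ≤ M ∧ ∀ (j : ℕ) (a : ℕ → ℝ),
        M⁻¹ * (Finset.range (j + 1)).sup' Finset.nonempty_range_add_one (fun k => |a k|)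
            ≤ ‖∑ k ∈ Finset.range (j + 1), a k • u k‖ ∧
        ‖∑ k ∈ Finset.range (j + 1), a k • u k‖
            ≤ M * (Finset.range (j + 1)).sup' Finset.nonempty_range_add_one (fun k => |a k|) :=
  stmt_6_general x hx1 ι hιd hnorm Q hQ Y hYc hYinf hss
end

section
/- Let (v_t)_{t∈2^{<ℕ}} be a sequence of elements of c₀₀ ⊆ E_X which is topologically equivalent to the basis of James tree and is a tree-block, i.e. for every σ ∈ 2^ℕ the sequence (v_{σ|n})_{n∈ℕ} is a block sequence of (e_n). Then there exist a dyadic subtree S₀ of 2^{<ℕ} and a constant Θ ≥ 1 such that Θ^{-1} ≤ ‖Q_X(v_t)‖_X ≤ Θ for every t ∈ S₀. -/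
/-!
Split according to whether, for some `δ > 0`, the nodes `t` with `‖Q (v t)‖ ≥ δ` are cofinal
above some node `s₀`. If so, a dyadic subtree can be threaded through them, and the upper bound
is just `‖Q (v t)‖ ≤ ‖Q‖ ‖v t‖`. If not, one finds a branch `σ` and nodes `σ|n_k` with
`‖Q (v (σ|n_k))‖ < 2⁻ᵏ`. Since the `v (σ|n_k)` are successive blocks, every partial sum of their
sum, cut at any coordinate `m`, is `Q` of the blocks before `m` plus a piece of one block; so the
sums `∑_{k<N} v (σ|n_k)` are bounded in `E`. Then the weak* limit of `v (σ|n)` along the branch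
is `0` (Cesàro), which contradicts the fact that it does not lie in `E`.
-/

open Filter

/-- `s` is a strict initial segment (proper prefix) of `t` in the dyadic tree
`2^{<ℕ}` (realized as `List Bool`). -/
def StrictPrefix (s t : List Bool) : Prop := s <+: t ∧ s ≠ t

/-- For incomparable nodes: `s ≺ t` iff `(s ∧ t)⌢0 ⊑ s` and `(s ∧ t)⌢1 ⊑ t`
where `s ∧ t` is the longest common initial segment of `s` and `t`
(equivalently, some common prefix `w` satisfies `w⌢0 ⊑ s` and `w⌢1 ⊑ t`). -/
def PrecRel (s t : List Bool) : Prop :=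
  ∃ w : List Bool, (w ++ [false]) <+: s ∧ (w ++ [true]) <+: t

/-- A dyadic subtree of `2^{<ℕ}`: an injective indexing `d : 2^{<ℕ} → 2^{<ℕ}`
preserving and reflecting both `⊏` and `≺`. -/
def IsDyadicSubtree (d : List Bool → List Bool) : Prop :=
  Function.Injective d ∧
  (∀ t₀ t₁ : List Bool, StrictPrefix t₀ t₁ ↔ StrictPrefix (d t₀) (d t₁)) ∧
  (∀ t₀ t₁ : List Bool, PrecRel t₀ t₁ ↔ PrecRel (d t₀) (d t₁))

/-- A sequence `(x t)_{t ∈ 2^{<ℕ}}` in a Banach space `X` is topologically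
equivalent to the basis of James tree. -/
def TopEquivJamesTree {X : Type*} [NormedAddCommGroup X] [NormedSpace ℝ X]
    (x : List Bool → X) : Prop :=
  (∃ c C : ℝ, 0 < c ∧ c ≤ C ∧ ∀ t : List Bool, c ≤ ‖x t‖ ∧ ‖x t‖ ≤ C) ∧
  (∀ e : ℕ → List Bool, Function.Injective e →
    (∀ i j : ℕ, i ≠ j → ¬ (e i <+: e j) ∧ ¬ (e j <+: e i)) →
    ∀ f : X →L[ℝ] ℝ, Tendsto (fun n => f (x (e n))) atTop (nhds 0)) ∧
  (∃ L : (ℕ → Bool) → StrongDual ℝ (StrongDual ℝ X),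
    (∀ (σ : ℕ → Bool) (f : StrongDual ℝ X),
      Tendsto (fun n => f (x (List.ofFn fun i : Fin n => σ i))) atTop (nhds (L σ f))) ∧
    (∀ σ : ℕ → Bool, L σ ∉ Set.range (NormedSpace.inclusionInDoubleDual ℝ X)) ∧
    (∀ σ τ : ℕ → Bool, σ ≠ τ → L σ ≠ L τ))

lemma StrictPrefix.length_lt {s t : List Bool} (h : StrictPrefix s t) : s.length < t.length :=
  lt_of_le_of_ne h.1.length_le fun hl => h.2 (h.1.eq_of_length hl)

lemma StrictPrefix.of_length_lt {s t : List Bool} (h : s <+: t) (hl : s.length < t.length) :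
    StrictPrefix s t :=
  ⟨h, by rintro rfl; exact hl.false⟩

lemma not_prefix_of_append_false_of_append_true {w s : List Bool} (h₀ : w ++ [false] <+: s)
    (h₁ : w ++ [true] <+: s) : False := by
  simpa using (List.prefix_of_prefix_length_le h₀ h₁ (by simp)).eq_of_length (by simp)

lemma PrecRel.not_prefix {s t : List Bool} (h : PrecRel s t) : ¬ s <+: t ∧ ¬ t <+: s := by
  obtain ⟨w, h₀, h₁⟩ := h
  exact ⟨fun hst => not_prefix_of_append_false_of_append_true (h₀.trans hst) h₁,
    fun hts => not_prefix_of_append_false_of_append_true h₀ (h₁.trans hts)⟩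

lemma PrecRel.ne {s t : List Bool} (h : PrecRel s t) : s ≠ t := by
  rintro rfl
  exact h.not_prefix.1 (List.prefix_refl s)

lemma PrecRel.asymm {s t : List Bool} (h : PrecRel s t) : ¬ PrecRel t s := by
  rintro ⟨u, hu₀, hu₁⟩
  obtain ⟨w, hw₀, hw₁⟩ := h
  wlog hwu : w.length ≤ u.length generalizing s t w u
  · exact this w hw₀ hw₁ u hu₀ hu₁ (by omega)
  have hwu' : w ++ [false] <+: u ++ [true] := List.prefix_of_prefix_length_le hw₀ hu₁ (by simpa)
  rcases hwu.lt_or_eq with hlt | heq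
  · have : w ++ [false] <+: u ++ [false] :=
      (List.prefix_of_prefix_length_le hwu' (List.prefix_append u [true]) (by simpa)).trans
        (List.prefix_append u [false])
    exact not_prefix_of_append_false_of_append_true (this.trans hu₀) hw₁
  · simpa using hwu'.eq_of_length (by simp [heq])

lemma prefix_or_prefix_or_precRel_or_precRel : ∀ s t : List Bool,
    s <+: t ∨ t <+: s ∨ PrecRel s t ∨ PrecRel t s
  | [], _ => Or.inl List.nil_prefix
  | _ :: _, [] => Or.inr (Or.inl List.nil_prefix)
  | a :: s, b :: t => by
    by_cases hab : a = b
    · subst hab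
      have consPrec : ∀ {s t : List Bool}, PrecRel s t → PrecRel (a :: s) (a :: t) :=
        fun ⟨w, h₀, h₁⟩ => ⟨a :: w, by simpa using h₀, by simpa using h₁⟩
      rcases prefix_or_prefix_or_precRel_or_precRel s t with h | h | h | h
      · exact Or.inl (by simpa using h)
      · exact Or.inr (Or.inl (by simpa using h))
      · exact Or.inr (Or.inr (Or.inl (consPrec h)))
      · exact Or.inr (Or.inr (Or.inr (consPrec h)))
    · cases a <;> cases b
      exacts [absurd rfl hab, Or.inr (Or.inr (Or.inl ⟨[], by simp, by simp⟩)),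
        Or.inr (Or.inr (Or.inr ⟨[], by simp, by simp⟩)), absurd rfl hab]

lemma isDyadicSubtree_of_forward {d : List Bool → List Bool}
    (hS : ∀ t₀ t₁, StrictPrefix t₀ t₁ → StrictPrefix (d t₀) (d t₁))
    (hP : ∀ t₀ t₁, PrecRel t₀ t₁ → PrecRel (d t₀) (d t₁)) :
    IsDyadicSubtree d := by
  have hne : ∀ t₀ t₁, t₀ ≠ t₁ → d t₀ ≠ d t₁ := by
    intro t₀ t₁ hne
    rcases prefix_or_prefix_or_precRel_or_precRel t₀ t₁ with h | h | h | h
    · exact (hS _ _ ⟨h, hne⟩).2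
    · exact (hS _ _ ⟨h, hne.symm⟩).2.symm
    · exact (hP _ _ h).ne
    · exact (hP _ _ h).ne.symm
  refine ⟨fun t₀ t₁ h => by_contra fun h' => hne t₀ t₁ h' h, fun t₀ t₁ => ⟨hS t₀ t₁, fun h => ?_⟩,
    fun t₀ t₁ => ⟨hP t₀ t₁, fun h => ?_⟩⟩
  · have hne' : t₀ ≠ t₁ := by rintro rfl; exact h.2 rfl
    rcases prefix_or_prefix_or_precRel_or_precRel t₀ t₁ with h' | h' | h' | h'
    · exact ⟨h', hne'⟩
    · exact absurd (hS _ _ ⟨h', hne'.symm⟩).length_lt (not_lt.2 h.1.length_le)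
    · exact absurd h.1 (hP _ _ h').not_prefix.1
    · exact absurd h.1 (hP _ _ h').not_prefix.2
  · have hne' : t₀ ≠ t₁ := by rintro rfl; exact h.ne rfl
    rcases prefix_or_prefix_or_precRel_or_precRel t₀ t₁ with h' | h' | h' | h'
    · exact absurd (hS _ _ ⟨h', hne'⟩).1 h.not_prefix.1
    · exact absurd (hS _ _ ⟨h', hne'.symm⟩).1 h.not_prefix.2
    · exact h'
    · exact absurd h (hP _ _ h').asymm

section Subtree

variable (g : List Bool → List Bool)

def buildSubtree : List Bool → List Bool → List Bool
  | s, [] => g s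
  | s, b :: t => buildSubtree (g s ++ [b]) t

variable {g} (hg : ∀ s, s <+: g s)
include hg

lemma prefix_buildSubtree : ∀ s t, s <+: buildSubtree g s t
  | s, [] => hg s
  | s, _ :: t => ((hg s).trans (List.prefix_append _ _)).trans (prefix_buildSubtree _ t)

lemma exists_buildSubtree_eq : ∀ s t, ∃ s', s <+: s' ∧ buildSubtree g s t = g s'
  | s, [] => ⟨s, List.prefix_refl s, rfl⟩
  | s, b :: t => by
    obtain ⟨s', hs', heq⟩ := exists_buildSubtree_eq (g s ++ [b]) t
    exact ⟨s', ((hg s).trans (List.prefix_append _ _)).trans hs', heq⟩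

lemma strictPrefix_buildSubtree_append :
    ∀ s t {l : List Bool}, l ≠ [] → StrictPrefix (buildSubtree g s t) (buildSubtree g s (t ++ l))
  | _, [], [], hl => absurd rfl hl
  | s, [], b :: l, _ => by
    have h := prefix_buildSubtree hg (g s ++ [b]) l
    exact .of_length_lt (s := g s) ((List.prefix_append _ _).trans h)
      (lt_of_lt_of_le (by simp) h.length_le)
  | s, b :: t, l, hl => strictPrefix_buildSubtree_append (g s ++ [b]) t hl

lemma precRel_buildSubtree : ∀ s w l₀ l₁,
    PrecRel (buildSubtree g s (w ++ [false] ++ l₀)) (buildSubtree g s (w ++ [true] ++ l₁))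
  | s, [], l₀, l₁ => ⟨g s, prefix_buildSubtree hg _ l₀, prefix_buildSubtree hg _ l₁⟩
  | s, b :: w, l₀, l₁ => precRel_buildSubtree (g s ++ [b]) w l₀ l₁

lemma isDyadicSubtree_buildSubtree (s : List Bool) : IsDyadicSubtree (buildSubtree g s) := by
  apply isDyadicSubtree_of_forward
  · rintro t₀ _ ⟨⟨l, rfl⟩, hne⟩
    exact strictPrefix_buildSubtree_append hg s t₀ (by rintro rfl; simp at hne)
  · rintro _ _ ⟨w, ⟨l₀, rfl⟩, ⟨l₁, rfl⟩⟩
    exact precRel_buildSubtree hg s w l₀ l₁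

end Subtree

lemma exists_isDyadicSubtree_forall_mem {B : List Bool → Prop} {s₀ : List Bool}
    (H : ∀ t, s₀ <+: t → ∃ t', t <+: t' ∧ B t') : ∃ d, IsDyadicSubtree d ∧ ∀ t, B (d t) := by
  classical
  let g s := if h : s₀ <+: s then (H s h).choose else s
  have hg : ∀ s, s <+: g s := fun s => by
    by_cases h : s₀ <+: s
    · simpa only [g, dif_pos h] using (H s h).choose_spec.1
    · simp only [g, dif_neg h, List.prefix_refl]
  refine ⟨buildSubtree g s₀, isDyadicSubtree_buildSubtree hg s₀, fun t => ?_⟩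
  obtain ⟨s, hs, heq⟩ := exists_buildSubtree_eq hg s₀ t
  simpa only [heq, g, dif_pos hs] using (H s hs).choose_spec.2

lemma exists_ofFn_eq_of_strictPrefix_chain {T : ℕ → List Bool}
    (hT : ∀ k, StrictPrefix (T k) (T (k + 1))) :
    ∃ σ : ℕ → Bool, ∀ k, List.ofFn (fun i : Fin (T k).length => σ i) = T k := by
  have hmono : ∀ {j k}, j ≤ k → T j <+: T k := fun {j} k hjk => by
    induction k, hjk using Nat.le_induction with
    | base => exact List.prefix_refl _
    | succ k _ ih => exact ih.trans (hT k).1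
  have hlen : ∀ k, k ≤ (T k).length := fun k => by
    induction k with
    | zero => exact Nat.zero_le _
    | succ k ih => exact ih.trans_lt (hT k).length_lt
  refine ⟨fun n => (T (n + 1)).getD n false, fun k => List.ext_getElem (by simp) fun i h₁ h₂ => ?_⟩
  have hi : i < (T (i + 1)).length := (hlen (i + 1)).trans_lt' (Nat.lt_succ_self i)
  simp only [List.getElem_ofFn, List.getD_eq_getElem _ _ hi]
  rcases le_total (i + 1) k with h | h
  · exact (hmono h).getElem hi
  · exact ((hmono h).getElem h₂).symm

lemma exists_strictMono_branch {P : ℕ → List Bool → Prop}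
    (h : ∀ k s, ∃ t, StrictPrefix s t ∧ P k t) :
    ∃ (σ : ℕ → Bool) (n : ℕ → ℕ), StrictMono n ∧
      ∀ k, P k (List.ofFn fun i : Fin (n k) => σ i) := by
  choose g hg using h
  let T : ℕ → List Bool := fun k => Nat.rec [] g k
  obtain ⟨σ, hσ⟩ := exists_ofFn_eq_of_strictPrefix_chain fun k => (hg k (T k)).1
  refine ⟨σ, fun k => (T (k + 1)).length,
    strictMono_nat_of_lt_succ fun k => (hg (k + 1) (T (k + 1))).1.length_lt, fun k => ?_⟩
  rw [hσ (k + 1)]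
  exact (hg k (T k)).2

def AreSuccessive {α M : Type*} [LinearOrder α] [Zero M] (u : ℕ → α →₀ M) : Prop :=
  ∀ ⦃k k'⦄, k < k' → ∀ i ∈ (u k).support, ∀ j ∈ (u k').support, i < j

namespace AreSuccessive

variable {α M : Type*} [LinearOrder α] [Zero M] {u : ℕ → α →₀ M}

lemma of_succ (hne : ∀ k, u k ≠ 0)
    (hu : ∀ k, ∀ i ∈ (u k).support, ∀ j ∈ (u (k + 1)).support, i < j) : AreSuccessive u := by
  intro k k' hkk'
  induction k', hkk' using Nat.le_induction with
  | base => exact hu k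
  | succ k' _ ih =>
    intro i hi j hj
    obtain ⟨p, hp⟩ := Finsupp.support_nonempty_iff.2 (hne k')
    exact (ih i hi p hp).trans (hu k' p hp j hj)

lemma comp_strictMono (hu : AreSuccessive u) {n : ℕ → ℕ} (hn : StrictMono n) :
    AreSuccessive (u ∘ n) :=
  fun _ _ hkk' => hu (hn hkk')

end AreSuccessive

lemma eq_zero_of_tendsto_of_abs_sum_le {a : ℕ → ℝ} {l B : ℝ} (ha : Tendsto a atTop (nhds l))
    (hB : ∀ N, |∑ k ∈ Finset.range N, a k| ≤ B) : l = 0 := by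
  refine tendsto_nhds_unique ha.cesaro (squeeze_zero_norm (fun N => ?_)
    (by simpa using tendsto_inv_atTop_nhds_zero_nat.mul_const B))
  rw [norm_mul, norm_inv, Real.norm_natCast, Real.norm_eq_abs]
  exact mul_le_mul_of_nonneg_left (hB N) (by positivity)

section Completion

open Finset

variable {X E : Type*} [NormedAddCommGroup X] [NormedSpace ℝ X]
  [NormedAddCommGroup E] [NormedSpace ℝ E]

lemma bddAbove_range_norm_partialSum (x : ℕ → X) (z : ℕ →₀ ℝ) :
    BddAbove (Set.range fun m => ‖∑ n ∈ range (m + 1), z n • x n‖) := by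
  refine ⟨∑ n ∈ z.support, ‖z n • x n‖, ?_⟩
  rintro _ ⟨m, rfl⟩
  calc ‖∑ n ∈ range (m + 1), z n • x n‖
      ≤ ∑ n ∈ range (m + 1), ‖z n • x n‖ := norm_sum_le _ _
    _ = ∑ n ∈ range (m + 1) ∩ z.support, ‖z n • x n‖ :=
        (sum_subset inter_subset_left fun n _ hn => by simp_all).symm
    _ ≤ ∑ n ∈ z.support, ‖z n • x n‖ :=
        sum_le_sum_of_subset_of_nonneg inter_subset_right fun _ _ _ => norm_nonneg _

variable {x : ℕ → X} {ι : (ℕ →₀ ℝ) →ₗ[ℝ] E}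
  (hnorm : ∀ z : ℕ →₀ ℝ, ‖ι z‖ = ⨆ m : ℕ, ‖∑ n ∈ range (m + 1), z n • x n‖)
  {Q : E →L[ℝ] X} (hQ : ∀ n, Q (ι (Finsupp.single n 1)) = x n)

include hnorm in
lemma norm_partialSum_le (z : ℕ →₀ ℝ) (m : ℕ) : ‖∑ n ∈ range (m + 1), z n • x n‖ ≤ ‖ι z‖ :=
  hnorm z ▸ le_ciSup (bddAbove_range_norm_partialSum x z) m

include hnorm in
lemma norm_le_of_forall_norm_partialSum_le {z : ℕ →₀ ℝ} {b : ℝ}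
    (h : ∀ m, ‖∑ n ∈ range (m + 1), z n • x n‖ ≤ b) : ‖ι z‖ ≤ b :=
  hnorm z ▸ ciSup_le h

include hQ in
lemma apply_eq_linearCombination (z : ℕ →₀ ℝ) : Q (ι z) = Finsupp.linearCombination ℝ x z := by
  have : Q.toLinearMap ∘ₗ ι = Finsupp.linearCombination ℝ x := Finsupp.lhom_ext fun n a => by
    rw [← mul_one a, ← smul_eq_mul, ← Finsupp.smul_single]
    simp only [LinearMap.coe_comp, Function.comp_apply, map_smul, ContinuousLinearMap.coe_coe, hQ,
      Finsupp.linearCombination_single, one_smul]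
  exact LinearMap.congr_fun this z

include hQ in
lemma partialSum_eq_of_support_subset {z : ℕ →₀ ℝ} {m : ℕ} (h : z.support ⊆ range (m + 1)) :
    ∑ n ∈ range (m + 1), z n • x n = Q (ι z) := by
  rw [apply_eq_linearCombination hQ, Finsupp.linearCombination_apply,
    Finsupp.sum_of_support_subset z h (fun i a => a • x i) fun _ _ => zero_smul ℝ _]

include hnorm hQ in
/-- At a cut-off `m`, the blocks lying before `m` contribute through `Q`, at most one block `p`
straddles `m` and contributes at most its `E`-norm, and the later blocks contribute nothing. -/
lemma exists_norm_partialSum_successive_le {u : ℕ → ℕ →₀ ℝ} (hu : AreSuccessive u)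
    {ε : ℕ → ℝ} {C : ℝ} (hQu : ∀ k, ‖Q (ι (u k))‖ ≤ ε k) (hC : ∀ k, ‖ι (u k)‖ ≤ C) (m : ℕ) :
    ∃ p, ∀ k, ‖∑ n ∈ range (m + 1), u k n • x n‖ ≤ ε k + if p = k then C else 0 := by
  have hε : ∀ k, 0 ≤ ε k := fun k => (norm_nonneg _).trans (hQu k)
  by_cases hstraddle : ∃ p, ¬ (u p).support ⊆ range (m + 1)
  · classical
    refine ⟨Nat.find hstraddle, fun k => ?_⟩
    rcases lt_trichotomy k (Nat.find hstraddle) with hk | hk | hk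
    · rw [partialSum_eq_of_support_subset hQ (not_not.1 (Nat.find_min hstraddle hk)),
        if_neg hk.ne']
      linarith [hQu k]
    · rw [if_pos hk.symm]
      linarith [norm_partialSum_le hnorm (u k) m, hC k, hε k]
    · obtain ⟨i, hi, him⟩ := Set.not_subset.1 (Nat.find_spec hstraddle)
      have hzero : ∀ n ∈ range (m + 1), u k n • x n = 0 := fun n hn => by
        have : n ∉ (u k).support := fun hn' => by
          have := hu hk i hi n hn'
          simp only [coe_range, Set.mem_Iio, mem_range] at him hn
          omega
        rw [Finsupp.notMem_support_iff.1 this, zero_smul]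
      rw [sum_eq_zero hzero, norm_zero, if_neg hk.ne]
      linarith [hε k]
  · push Not at hstraddle
    refine ⟨0, fun k => ?_⟩
    have hC₀ : 0 ≤ C := (norm_nonneg _).trans (hC 0)
    rw [partialSum_eq_of_support_subset hQ (hstraddle k)]
    split_ifs <;> linarith [hQu k]

include hnorm hQ in
lemma norm_sum_successive_le {u : ℕ → ℕ →₀ ℝ} (hu : AreSuccessive u) {ε : ℕ → ℝ} {C : ℝ}
    (hQu : ∀ k, ‖Q (ι (u k))‖ ≤ ε k) (hC : ∀ k, ‖ι (u k)‖ ≤ C) (N : ℕ) :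
    ‖ι (∑ k ∈ range N, u k)‖ ≤ ∑ k ∈ range N, ε k + C := by
  refine norm_le_of_forall_norm_partialSum_le hnorm fun m => ?_
  obtain ⟨p, hp⟩ := exists_norm_partialSum_successive_le hnorm hQ hu hQu hC m
  have hsplit : ∑ n ∈ range (m + 1), (∑ k ∈ range N, u k) n • x n
      = ∑ k ∈ range N, ∑ n ∈ range (m + 1), u k n • x n := by
    simp only [Finsupp.coe_finsetSum, Finset.sum_apply, Finset.sum_smul]
    exact Finset.sum_comm
  have hC₀ : 0 ≤ C := (norm_nonneg _).trans (hC 0)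
  calc ‖∑ n ∈ range (m + 1), (∑ k ∈ range N, u k) n • x n‖
      ≤ ∑ k ∈ range N, ‖∑ n ∈ range (m + 1), u k n • x n‖ := hsplit ▸ norm_sum_le _ _
    _ ≤ ∑ k ∈ range N, (ε k + if p = k then C else 0) := sum_le_sum fun k _ => hp k
    _ ≤ ∑ k ∈ range N, ε k + C := by
        rw [sum_add_distrib, sum_ite_eq]
        split_ifs <;> linarith

include hnorm hQ in
lemma weak_limit_eq_zero_of_successive {u : ℕ → ℕ →₀ ℝ} (hu : AreSuccessive u) {ε : ℕ → ℝ}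
    (hε : Summable ε) {C : ℝ} (hQu : ∀ k, ‖Q (ι (u k))‖ ≤ ε k) (hC : ∀ k, ‖ι (u k)‖ ≤ C)
    (f : StrongDual ℝ E) {l : ℝ} (hf : Tendsto (fun k => f (ι (u k))) atTop (nhds l)) : l = 0 := by
  refine eq_zero_of_tendsto_of_abs_sum_le hf (B := ‖f‖ * (∑' k, ε k + C)) fun N => ?_
  rw [← map_sum, ← map_sum, ← Real.norm_eq_abs]
  refine (f.le_opNorm _).trans (mul_le_mul_of_nonneg_left ?_ (norm_nonneg f))
  refine (norm_sum_successive_le hnorm hQ hu hQu hC N).trans ?_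
  gcongr
  exact hε.sum_le_tsum _ fun k _ => (norm_nonneg _).trans (hQu k)

include hnorm hQ in
lemma exists_cofinal_le_norm_apply {v : List Bool → ℕ →₀ ℝ} {C : ℝ}
    (hC : ∀ t, ‖ι (v t)‖ ≤ C)
    (hblock : ∀ σ : ℕ → Bool,
      (∀ n : ℕ, v (List.ofFn fun i : Fin n => σ i) ≠ 0) ∧
      (∀ n : ℕ, ∀ i ∈ (v (List.ofFn fun i : Fin n => σ i)).support,
        ∀ j ∈ (v (List.ofFn fun i : Fin (n + 1) => σ i)).support, i < j))
    {L : (ℕ → Bool) → StrongDual ℝ (StrongDual ℝ E)}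
    (hL : ∀ σ f, Tendsto (fun n => f (ι (v (List.ofFn fun i : Fin n => σ i)))) atTop
      (nhds (L σ f)))
    (hL₀ : ∀ σ, L σ ≠ 0) :
    ∃ δ > 0, ∃ s₀, ∀ t, s₀ <+: t → ∃ t', t <+: t' ∧ δ ≤ ‖Q (ι (v t'))‖ := by
  by_contra! hsmall
  have hsmall' : ∀ (k : ℕ) s, ∃ t, StrictPrefix s t ∧ ‖Q (ι (v t))‖ < (1 / 2) ^ k := by
    intro k s
    obtain ⟨t, hst, ht⟩ := hsmall ((1 / 2) ^ k) (by positivity) (s ++ [false])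
    exact ⟨t, .of_length_lt ((List.prefix_append _ _).trans hst)
      (lt_of_lt_of_le (by simp) hst.length_le), ht t (List.prefix_refl t)⟩
  obtain ⟨σ, n, hn, hσ⟩ := exists_strictMono_branch hsmall'
  have hu : AreSuccessive fun k => v (List.ofFn fun i : Fin (n k) => σ i) :=
    (AreSuccessive.of_succ (hblock σ).1 (hblock σ).2).comp_strictMono hn
  refine hL₀ σ (ContinuousLinearMap.ext fun f => ?_)
  exact weak_limit_eq_zero_of_successive hnorm hQ hu summable_geometric_two (fun k => (hσ k).le)
    (fun k => hC _) f ((hL σ f).comp hn.tendsto_atTop)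

end Completion

theorem stmt_15_general {X : Type*} [NormedAddCommGroup X] [NormedSpace ℝ X]
    (x : ℕ → X)
    {E : Type*} [NormedAddCommGroup E] [NormedSpace ℝ E]
    (ι : (ℕ →₀ ℝ) →ₗ[ℝ] E)
    (hnorm : ∀ z : ℕ →₀ ℝ,
      ‖ι z‖ = ⨆ m : ℕ, ‖∑ n ∈ Finset.range (m + 1), z n • x n‖)
    (Q : E →L[ℝ] X) (hQ : ∀ n, Q (ι (Finsupp.single n 1)) = x n)
    (v : List Bool → (ℕ →₀ ℝ))
    -- `(v t)` is topologically equivalent to the basis of James tree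
    (hJT : TopEquivJamesTree (fun t => ι (v t)))
    -- `(v t)` is a tree-block
    (hblock : ∀ σ : ℕ → Bool,
      (∀ n : ℕ, v (List.ofFn fun i : Fin n => σ i) ≠ 0) ∧
      (∀ n : ℕ, ∀ i ∈ (v (List.ofFn fun i : Fin n => σ i)).support,
        ∀ j ∈ (v (List.ofFn fun i : Fin (n + 1) => σ i)).support, i < j)) :
    ∃ d : List Bool → List Bool, IsDyadicSubtree d ∧
      ∃ Θ : ℝ, 1 ≤ Θ ∧ ∀ t : List Bool,
        Θ⁻¹ ≤ ‖Q (ι (v (d t)))‖ ∧ ‖Q (ι (v (d t)))‖ ≤ Θ := by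
  obtain ⟨⟨_, C, -, -, hC⟩, -, L, hL, hLX, -⟩ := hJT
  obtain ⟨δ, hδ, s₀, hcofinal⟩ := exists_cofinal_le_norm_apply hnorm hQ (fun t => (hC t).2)
    hblock hL fun σ hσ => hLX σ ⟨0, by rw [map_zero, hσ]⟩
  obtain ⟨d, hd, hdδ⟩ := exists_isDyadicSubtree_forall_mem hcofinal
  refine ⟨d, hd, max 1 (max δ⁻¹ (‖Q‖ * C)), le_max_left _ _, fun t => ⟨?_, ?_⟩⟩
  · refine le_trans ?_ (hdδ t)
    exact inv_le_of_inv_le₀ hδ ((le_max_left _ _).trans (le_max_right _ _))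
  · calc ‖Q (ι (v (d t)))‖ ≤ ‖Q‖ * C :=
          (Q.le_opNorm _).trans (mul_le_mul_of_nonneg_left (hC (d t)).2 (norm_nonneg Q))
      _ ≤ _ := (le_max_right _ _).trans (le_max_right _ _)

/-- If `(v t)` is a tree-block sequence of vectors of `c₀₀`
in `E_X` which is topologically equivalent to the basis of James tree, then
there are a dyadic subtree `S₀` (given by the indexing `d`) and a constant
`Θ ≥ 1` such that `Θ⁻¹ ≤ ‖Q_X (v t)‖ ≤ Θ` for every `t ∈ S₀`. -/
theorem stmt_15 {X : Type*} [NormedAddCommGroup X] [NormedSpace ℝ X] [CompleteSpace X]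
    (x : ℕ → X) (hx1 : ∀ n, ‖x n‖ = 1)
    (hxd : ∀ y : X, ‖y‖ = 1 → ∀ ε : ℝ, 0 < ε → ∃ n, ‖y - x n‖ < ε)
    {E : Type*} [NormedAddCommGroup E] [NormedSpace ℝ E] [CompleteSpace E]
    (ι : (ℕ →₀ ℝ) →ₗ[ℝ] E) (hιd : DenseRange ι)
    (hnorm : ∀ z : ℕ →₀ ℝ,
      ‖ι z‖ = ⨆ m : ℕ, ‖∑ n ∈ Finset.range (m + 1), z n • x n‖)
    (Q : E →L[ℝ] X) (hQ : ∀ n, Q (ι (Finsupp.single n 1)) = x n)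
    (v : List Bool → (ℕ →₀ ℝ))
    -- `(v t)` is topologically equivalent to the basis of James tree
    (hJT : TopEquivJamesTree (fun t => ι (v t)))
    -- `(v t)` is a tree-block
    (hblock : ∀ σ : ℕ → Bool,
      (∀ n : ℕ, v (List.ofFn fun i : Fin n => σ i) ≠ 0) ∧
      (∀ n : ℕ, ∀ i ∈ (v (List.ofFn fun i : Fin n => σ i)).support,
        ∀ j ∈ (v (List.ofFn fun i : Fin (n + 1) => σ i)).support, i < j)) :
    ∃ d : List Bool → List Bool, IsDyadicSubtree d ∧
      ∃ Θ : ℝ, 1 ≤ Θ ∧ ∀ t : List Bool,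
        Θ⁻¹ ≤ ‖Q (ι (v (d t)))‖ ∧ ‖Q (ι (v (d t)))‖ ≤ Θ :=
  stmt_15_general x ι hnorm Q hQ v hJT hblock
end
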